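/- arXiv:1512.07935 — 3 statements merged into one kernel-verified Lean document; each statement's English description precedes it below -/
import Mathlib

section
/- Let d > 0, let k ≥ 1 be a natural number, and let φ : ℝ → ℝ be a C^∞ function. Then the limit as ε → 0⁺ of ∫_ε^d t^{−k} φ(t) dt + Σ_{j=0}^{k−2} (φ^{(j)}(0)/j!) · ε^{j+1−k}/(j+1−k) + (φ^{(k−1)}(0)/(k−1)!) · log ε exists in ℝ (this limit is Hadamard's finite part Pf.∫_0^d t^{−k} φ(t) dt). -/
/-!
Subtract from `φ` its Taylor polynomial `P` of degree `k - 1` at `0`. By Taylor's theorem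
`|φ t - P t| ≤ C t ^ k` on `[0, d]`, so `(φ t - P t) / t ^ k` is bounded and hence integrable on
`(0, d)`, and its integral over `[ε, d]` converges as `ε → 0⁺`. What remains, `P t / t ^ k`, is a
finite sum of powers `t ^ (j - k)` whose primitives are explicit, and the terms added to the
integral in the finite part are exactly minus these primitives at `ε`, so they cancel all
divergent dependence on `ε`.
-/

open MeasureTheory Filter Set Topology intervalIntegral

theorem exists_abs_sub_taylor_le_pow {f : ℝ → ℝ} {n : ℕ} (hf : ContDiff ℝ (n + 1) f) {a b : ℝ}
    (hab : a < b) :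
    ∃ C, ∀ x ∈ Icc a b,
      |f x - ∑ j ∈ Finset.range (n + 1), iteratedDeriv j f a / Nat.factorial j * (x - a) ^ j| ≤
        C * (x - a) ^ (n + 1) := by
  obtain ⟨C, hC⟩ := exists_taylor_mean_remainder_bound hab.le hf.contDiffOn
  refine ⟨C, fun x hx => ?_⟩
  have htaylor : taylorWithinEval f n (Icc a b) a x =
      ∑ j ∈ Finset.range (n + 1), iteratedDeriv j f a / Nat.factorial j * (x - a) ^ j := by
    rw [taylor_within_apply]
    refine Finset.sum_congr rfl fun j hj => ?_
    rw [iteratedDerivWithin_eq_iteratedDeriv (uniqueDiffOn_Icc hab)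
      (hf.of_le ?_).contDiffAt (left_mem_Icc.mpr hab.le), smul_eq_mul]
    · ring
    · exact_mod_cast Finset.mem_range_succ_iff.mp hj |>.trans (Nat.le_succ n)
  simpa [htaylor, Real.norm_eq_abs] using hC x hx

theorem intervalIntegrable_div_pow_of_abs_le_mul_pow {g : ℝ → ℝ} {k : ℕ} {b C : ℝ}
    (hg : Measurable g) (hb : 0 ≤ b) (hbound : ∀ t ∈ Ioc 0 b, |g t| ≤ C * t ^ k) :
    IntervalIntegrable (fun t => g t / t ^ k) volume 0 b := by
  rw [intervalIntegrable_iff_integrableOn_Ioc_of_le hb]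
  refine Measure.integrableOn_of_bounded (M := C) (by simp)
    (hg.div (continuous_pow k).measurable).aestronglyMeasurable ?_
  rw [ae_restrict_iff' measurableSet_Ioc]
  refine Eventually.of_forall fun t ht => ?_
  have htk : 0 < t ^ k := pow_pos ht.1 k
  rw [Real.norm_eq_abs, abs_div, abs_of_pos htk, div_le_iff₀ htk]
  exact hbound t ht

theorem tendsto_integral_nhdsGT_left {E : Type*} [NormedAddCommGroup E] [NormedSpace ℝ E]
    {f : ℝ → E} {a b : ℝ} (hab : a < b) (hf : IntervalIntegrable f volume a b) :
    Tendsto (fun x => ∫ t in x..b, f t) (𝓝[>] a) (𝓝 (∫ t in a..b, f t)) := by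
  have hcont := continuousOn_primitive_interval_left
    ((intervalIntegrable_iff' (f := f)).mp hf) a left_mem_uIcc
  rw [uIcc_of_le hab.le] at hcont
  exact hcont.mono_of_mem_nhdsWithin (Icc_mem_nhdsGT hab)

noncomputable def principalPart (c : ℕ → ℝ) (k : ℕ) (t : ℝ) : ℝ :=
  ∑ j ∈ Finset.range k, c j * t ^ ((j : ℤ) - k)

/-- A primitive of `principalPart c k` on `(0, ∞)`; for the Taylor coefficients
`c j = φ⁽ʲ⁾(0) / j!` its value at `ε` is the correction term of the finite part. -/
noncomputable def principalPartPrimitive (c : ℕ → ℝ) (k : ℕ) (t : ℝ) : ℝ :=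
  ∑ j ∈ Finset.range (k - 1), c j * t ^ ((j : ℤ) + 1 - k) / ((j : ℝ) + 1 - k) +
    c (k - 1) * Real.log t

theorem div_pow_eq_sub_div_add_principalPart (f : ℝ → ℝ) (c : ℕ → ℝ) (k : ℕ) {t : ℝ}
    (ht : t ≠ 0) :
    f t / t ^ k = (f t - ∑ j ∈ Finset.range k, c j * t ^ j) / t ^ k + principalPart c k t := by
  have hterm : ∀ j ∈ Finset.range k, c j * t ^ ((j : ℤ) - k) = c j * t ^ j / t ^ k :=
    fun j _ => by rw [zpow_sub₀ ht, zpow_natCast, zpow_natCast, mul_div_assoc]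
  rw [principalPart, Finset.sum_congr rfl hterm, ← Finset.sum_div, sub_div, sub_add_cancel]

theorem continuousOn_principalPart (c : ℕ → ℝ) (k : ℕ) {s : Set ℝ} (hs : (0 : ℝ) ∉ s) :
    ContinuousOn (principalPart c k) s := by
  refine continuousOn_finsetSum _ fun j _ => continuousOn_const.mul ?_
  exact continuousOn_id.zpow₀ _ fun t ht => Or.inl fun h => hs (h ▸ ht)

theorem integral_principalPart (c : ℕ → ℝ) {k : ℕ} (hk : 1 ≤ k) {a b : ℝ} (ha : 0 < a)
    (hb : 0 < b) :
    ∫ t in a..b, principalPart c k t =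
      principalPartPrimitive c k b - principalPartPrimitive c k a := by
  obtain ⟨n, rfl⟩ := Nat.exists_eq_add_of_le' hk
  have h0 : (0 : ℝ) ∉ uIcc a b := notMem_uIcc_of_lt ha hb
  have hint : ∀ j ∈ Finset.range (n + 1),
      IntervalIntegrable (fun t : ℝ => c j * t ^ ((j : ℤ) - ↑(n + 1))) volume a b :=
    fun j _ => (intervalIntegrable_zpow (Or.inr h0)).const_mul (c j)
  have hpow : ∀ j ∈ Finset.range n, ∫ t in a..b, c j * t ^ ((j : ℤ) - ↑(n + 1)) =
      c j * b ^ ((j : ℤ) + 1 - ↑(n + 1)) / ((j : ℝ) + 1 - ↑(n + 1)) -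
        c j * a ^ ((j : ℤ) + 1 - ↑(n + 1)) / ((j : ℝ) + 1 - ↑(n + 1)) := by
    intro j hj
    have hne : (j : ℤ) - ↑(n + 1) ≠ -1 := by have := Finset.mem_range.mp hj; omega
    rw [intervalIntegral.integral_const_mul, integral_zpow (Or.inr ⟨hne, h0⟩)]
    push_cast
    ring_nf
  have hlog : ∫ t in a..b, c n * t ^ ((n : ℤ) - ↑(n + 1)) =
      c n * Real.log b - c n * Real.log a := by
    rw [show (n : ℤ) - ↑(n + 1) = -1 by push_cast; ring, intervalIntegral.integral_const_mul]
    simp only [zpow_neg_one]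
    rw [integral_inv h0, Real.log_div hb.ne' ha.ne', mul_sub]
  simp only [principalPart, principalPartPrimitive, Nat.add_sub_cancel]
  rw [integral_finsetSum hint, Finset.sum_range_succ, Finset.sum_congr rfl hpow, hlog,
    Finset.sum_sub_distrib]
  ring

theorem integral_div_pow_eq_integral_sub_div_add {f : ℝ → ℝ} (c : ℕ → ℝ) {k : ℕ} (hk : 1 ≤ k)
    {a b : ℝ} (ha : 0 < a) (hb : 0 < b) (hf : ContinuousOn f (uIcc a b)) :
    ∫ t in a..b, f t / t ^ k =
      (∫ t in a..b, (f t - ∑ j ∈ Finset.range k, c j * t ^ j) / t ^ k) +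
        (principalPartPrimitive c k b - principalPartPrimitive c k a) := by
  have h0 : (0 : ℝ) ∉ uIcc a b := notMem_uIcc_of_lt ha hb
  have hne : ∀ t ∈ uIcc a b, t ≠ 0 := fun t ht h => h0 (h ▸ ht)
  have hrem : ContinuousOn (fun t => (f t - ∑ j ∈ Finset.range k, c j * t ^ j) / t ^ k)
      (uIcc a b) :=
    (hf.sub (by fun_prop)).div (continuousOn_pow k) fun t ht => pow_ne_zero k (hne t ht)
  rw [integral_congr fun t ht => div_pow_eq_sub_div_add_principalPart f c k (hne t ht),
    integral_add hrem.intervalIntegrable (continuousOn_principalPart c k h0).intervalIntegrable,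
    integral_principalPart c hk ha hb]

/-- existence of Hadamard's finite part `Pf.∫_0^d t^{-k} φ(t) dt`. -/
theorem hadamard_finite_part_exists_neg_int
    (d : ℝ) (hd : 0 < d) (k : ℕ) (hk : 1 ≤ k) (φ : ℝ → ℝ) (hφ : ContDiff ℝ (⊤ : ℕ∞) φ) :
    ∃ L : ℝ, Tendsto (fun ε : ℝ =>
        (∫ t in ε..d, φ t / t ^ k) +
          ∑ j ∈ Finset.range (k - 1),
            (iteratedDeriv j φ 0 / (Nat.factorial j)) *
              ε ^ ((j : ℤ) + 1 - k) / ((j : ℝ) + 1 - k) +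
          (iteratedDeriv (k - 1) φ 0 / (Nat.factorial (k - 1))) * Real.log ε)
      (nhdsWithin 0 (Ioi 0)) (nhds L) := by
  obtain ⟨n, rfl⟩ := Nat.exists_eq_add_of_le' hk
  let c : ℕ → ℝ := fun j => iteratedDeriv j φ 0 / Nat.factorial j
  let ψ : ℝ → ℝ := fun t => (φ t - ∑ j ∈ Finset.range (n + 1), c j * t ^ j) / t ^ (n + 1)
  obtain ⟨C, hC⟩ := exists_abs_sub_taylor_le_pow (hφ.of_le (by exact_mod_cast le_top)) hd
  have hψ : IntervalIntegrable ψ volume 0 d :=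
    intervalIntegrable_div_pow_of_abs_le_mul_pow (hφ.continuous.measurable.sub (by fun_prop))
      hd.le fun t ht => by simpa using hC t (Ioc_subset_Icc_self ht)
  refine ⟨(∫ t in 0..d, ψ t) + principalPartPrimitive c (n + 1) d,
    ((tendsto_integral_nhdsGT_left hd hψ).add_const _).congr' ?_⟩
  filter_upwards [Ioo_mem_nhdsGT hd] with ε hε
  rw [integral_div_pow_eq_integral_sub_div_add c hk hε.1 hd hφ.continuous.continuousOn]
  simp only [principalPartPrimitive, ψ, c]
  ring
end

section
/- Let d > 0, let k ≥ 1 be a natural number, and let φ : ℝ → ℝ be a C^∞ function. For z ∈ ℂ with Re z > −k−1 and z ∉ {−1, …, −k}, define F(z) = ∫_0^d t^z (φ(t) − Σ_{i=0}^{k−1} φ^{(i)}(0) t^i / i!) dt + Σ_{i=0}^{k−1} (φ^{(i)}(0)/i!) · d^{z+i+1}/(z+i+1). Then: (a) for every such z, F(z) equals the limit as ε → 0⁺ of ∫_ε^d t^z φ(t) dt + Σ_{j=0}^{k−1} (φ^{(j)}(0)/j!) · ε^{z+j+1}/(z+j+1); and (b) the limit of F(z) − φ^{(k−1)}(0)/((k−1)!(z+k))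 as z → −k exists and equals the limit as ε → 0⁺ of ∫_ε^d t^{−k} φ(t) dt + Σ_{j=0}^{k−2} (φ^{(j)}(0)/j!) · ε^{j+1−k}/(j+1−k) + (φ^{(k−1)}(0)/(k−1)!) · log ε. -/
open MeasureTheory Filter Set intervalIntegral Topology
open scoped Interval

/-!
Let `P` be the Taylor polynomial of `φ` at `0` of degree `< k`. The remainder `φ - P` is
`O(t ^ k)` on `[0, d]`, so `t ^ z (φ - P)(t)` is dominated by an integrable power of `t`
uniformly for `z` near any point of `Re z > -k - 1`: its integral over `(0, d]` exists, is the
limit of the integrals over `[ε, d]`, and is continuous in `z`. The monomials of `P` are integrated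
in closed form: `t ^ (z + i)` gives `(d ^ (z + i + 1) - ε ^ (z + i + 1)) / (z + i + 1)`, and at
`z = -k` the top monomial gives `log d - log ε`; the `ε`-terms are exactly the counterterms of the
finite part. At the pole, `(d ^ (z + k) - 1) / (z + k) → log d` is the difference quotient of
`w ↦ d ^ w` at `0`.
-/

theorem exists_abs_sub_sum_iteratedDeriv_le {φ : ℝ → ℝ} {k : ℕ} (hφ : ContDiff ℝ k φ)
    {d : ℝ} (hd : 0 < d) :
    ∃ C, ∀ t ∈ Icc 0 d,
      |φ t - ∑ i ∈ Finset.range k, iteratedDeriv i φ 0 * t ^ i / i.factorial| ≤ C * t ^ k := by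
  cases k with
  | zero =>
    obtain ⟨C, hC⟩ := isCompact_Icc.exists_bound_of_continuousOn hφ.continuous.continuousOn
    exact ⟨C, fun t ht => by simpa using hC t ht⟩
  | succ n =>
    obtain ⟨C, hC⟩ := exists_taylor_mean_remainder_bound hd.le hφ.contDiffOn
    refine ⟨C, fun t ht => ?_⟩
    have htaylor : taylorWithinEval φ n (Icc 0 d) 0 t =
        ∑ i ∈ Finset.range (n + 1), iteratedDeriv i φ 0 * t ^ i / i.factorial := by
      rw [taylor_within_apply]
      refine Finset.sum_congr rfl fun i hi => ?_
      have hi : (i : WithTop ℕ∞) ≤ (n + 1 : ℕ) := mod_cast (Finset.mem_range.1 hi).le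
      rw [iteratedDerivWithin_eq_iteratedDeriv (uniqueDiffOn_Icc hd)
        (hφ.contDiffAt.of_le hi) (left_mem_Icc.2 hd.le), smul_eq_mul, sub_zero]
      field_simp
    simpa [htaylor] using hC t ht

theorem norm_ofReal_cpow_mul_le {t r C : ℝ} {k : ℕ} (ht : 0 < t) (hr : |r| ≤ C * t ^ k)
    (z : ℂ) : ‖(t : ℂ) ^ z * r‖ ≤ C * t ^ (z.re + k) := by
  rw [norm_mul, Complex.norm_cpow_eq_rpow_re_of_pos ht, Complex.norm_real, Real.norm_eq_abs,
    Real.rpow_add ht, Real.rpow_natCast]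
  calc t ^ z.re * |r| ≤ t ^ z.re * (C * t ^ k) := by gcongr
    _ = C * (t ^ z.re * t ^ k) := by ring

theorem rpow_le_rpow_add_rpow {t a b c : ℝ} (ht : 0 < t) (hab : a ≤ b) (hbc : b ≤ c) :
    t ^ b ≤ t ^ a + t ^ c := by
  rcases le_total t 1 with h | h
  · linarith [Real.rpow_le_rpow_of_exponent_ge ht h hab, Real.rpow_nonneg ht.le c]
  · linarith [Real.rpow_le_rpow_of_exponent_le h hbc, Real.rpow_nonneg ht.le a]

section PowerWeight

variable {d C : ℝ} {k : ℕ} {R : ℝ → ℝ}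

theorem aestronglyMeasurable_ofReal_cpow_mul (hR : Continuous R) (z : ℂ) :
    AEStronglyMeasurable (fun t : ℝ => (t : ℂ) ^ z * R t) (volume.restrict (Ioc 0 d)) :=
  ContinuousOn.aestronglyMeasurable (fun t ht =>
    ((Complex.continuousAt_ofReal_cpow_const t z (Or.inr ht.1.ne')).mul
      (Complex.continuous_ofReal.comp hR).continuousAt).continuousWithinAt) measurableSet_Ioc

theorem integrableOn_ofReal_cpow_mul (hR : Continuous R)
    (hC : ∀ t ∈ Ioc 0 d, |R t| ≤ C * t ^ k) {z : ℂ} (hz : -(k + 1 : ℝ) < z.re) :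
    IntegrableOn (fun t : ℝ => (t : ℂ) ^ z * R t) (Ioc 0 d) :=
  Integrable.mono' ((intervalIntegrable_rpow' (r := z.re + k) (by linarith)).1.const_mul C)
    (aestronglyMeasurable_ofReal_cpow_mul hR z)
    ((ae_restrict_iff' measurableSet_Ioc).2 (Eventually.of_forall fun t ht =>
      norm_ofReal_cpow_mul_le ht.1 (hC t ht) z))

theorem continuousAt_integral_ofReal_cpow_mul (hR : Continuous R)
    (hC : ∀ t ∈ Ioc 0 d, |R t| ≤ C * t ^ k) {z₀ : ℂ} (hz₀ : -(k + 1 : ℝ) < z₀.re) :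
    ContinuousAt (fun z : ℂ => ∫ t in Ioc 0 d, (t : ℂ) ^ z * R t) z₀ := by
  obtain ⟨δ, hδ, hδz₀⟩ : ∃ δ > 0, z₀.re + k + 1 = 2 * δ :=
    ⟨(z₀.re + k + 1) / 2, by linarith, by ring⟩
  have hC' : ∀ t ∈ Ioc 0 d, |R t| ≤ |C| * t ^ k := fun t ht =>
    (hC t ht).trans (by gcongr; exacts [pow_nonneg ht.1.le k, le_abs_self C])
  -- for `z` within `δ` of `z₀`, the exponent `z.re + k` stays in `[δ - 1, z₀.re + k + δ]`
  have hbound : ∀ z ∈ Metric.ball z₀ δ, ∀ t ∈ Ioc 0 d,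
      ‖(t : ℂ) ^ z * R t‖ ≤ |C| * (t ^ (δ - 1) + t ^ (z₀.re + k + δ)) := by
    intro z hz t ht
    have hre : |z.re - z₀.re| < δ := by
      simpa using (Complex.abs_re_le_norm (z - z₀)).trans_lt (mem_ball_iff_norm.1 hz)
    refine (norm_ofReal_cpow_mul_le ht.1 (hC' t ht) z).trans ?_
    gcongr
    exact rpow_le_rpow_add_rpow ht.1 (by linarith [(abs_lt.1 hre).1])
      (by linarith [(abs_lt.1 hre).2])
  refine continuousAt_of_dominated
    (bound := fun t => |C| * (t ^ (δ - 1) + t ^ (z₀.re + k + δ)))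
    (Eventually.of_forall (aestronglyMeasurable_ofReal_cpow_mul hR))
    ?_ (((intervalIntegrable_rpow' (by linarith)).1.add
      (intervalIntegrable_rpow' (by linarith)).1).const_mul |C|) ?_
  · filter_upwards [Metric.ball_mem_nhds z₀ hδ] with z hz
    exact (ae_restrict_iff' measurableSet_Ioc).2 (Eventually.of_forall (hbound z hz))
  · exact (ae_restrict_iff' measurableSet_Ioc).2 (Eventually.of_forall fun t ht =>
      (continuousAt_const_cpow (Complex.ofReal_ne_zero.2 ht.1.ne')).mul continuousAt_const)

theorem ofReal_cpow_neg_natCast_mul (t r : ℝ) (k : ℕ) :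
    (t : ℂ) ^ (-(k : ℂ)) * r = ((r / t ^ k : ℝ) : ℂ) := by
  rw [show -(k : ℂ) = ((-(k : ℤ) : ℤ) : ℂ) by push_cast; ring, Complex.cpow_intCast, zpow_neg,
    zpow_natCast]
  push_cast
  ring

end PowerWeight

theorem tendsto_integral_left_of_integrableOn_Ioc {E : Type*} [NormedAddCommGroup E]
    [NormedSpace ℝ E] {f : ℝ → E} {a b : ℝ} (hab : a < b) (hf : IntegrableOn f (Ioc a b)) :
    Tendsto (fun x => ∫ t in x..b, f t) (𝓝[>] a) (𝓝 (∫ t in a..b, f t)) := by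
  have hcont := continuousOn_primitive_interval_left (f := f) (μ := volume)
    (by rwa [uIcc_of_le hab.le, integrableOn_Icc_iff_integrableOn_Ioc]) a left_mem_uIcc
  rw [← nhdsWithin_Ioc_eq_nhdsGT hab]
  exact hcont.tendsto.mono_left
    (nhdsWithin_mono a (by rw [uIcc_of_le hab.le]; exact Ioc_subset_Icc_self))

section Polynomial

variable {ε d : ℝ} (a : ℕ → ℝ) {k : ℕ}

theorem integral_ofReal_cpow_mul_sum_pow (h0 : (0 : ℝ) ∉ [[ε, d]]) {z : ℂ}
    (hz : ∀ i < k, z + i + 1 ≠ 0) :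
    ∫ t in ε..d, (t : ℂ) ^ z * ↑(∑ i ∈ Finset.range k, a i * t ^ i) =
      ∑ i ∈ Finset.range k, (a i : ℂ) * ((d : ℂ) ^ (z + i + 1) - (ε : ℂ) ^ (z + i + 1)) /
        (z + i + 1) := by
  have hint : ∀ i ∈ Finset.range k,
      IntervalIntegrable (fun t : ℝ => (a i : ℂ) * (t : ℂ) ^ (z + i)) volume ε d :=
    fun i _ => (intervalIntegrable_cpow (Or.inr h0)).const_mul _
  calc ∫ t in ε..d, (t : ℂ) ^ z * ↑(∑ i ∈ Finset.range k, a i * t ^ i)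
      = ∫ t in ε..d, ∑ i ∈ Finset.range k, (a i : ℂ) * (t : ℂ) ^ (z + i) := by
        refine integral_congr fun t ht => ?_
        have ht0 : (t : ℂ) ≠ 0 := Complex.ofReal_ne_zero.2 fun h => h0 (h ▸ ht)
        simp only [Complex.cpow_add _ _ ht0, Complex.cpow_natCast, Complex.ofReal_sum,
          Complex.ofReal_mul, Complex.ofReal_pow, Finset.mul_sum]
        exact Finset.sum_congr rfl fun i _ => by ring
    _ = _ := by
        rw [integral_finsetSum hint]
        refine Finset.sum_congr rfl fun i hi => ?_
        have hi' : z + i ≠ -1 := fun h => hz i (Finset.mem_range.1 hi) (by rw [h]; ring)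
        rw [intervalIntegral.integral_const_mul, integral_cpow (Or.inr ⟨hi', h0⟩),
          mul_div_assoc]

theorem integral_sum_pow_div_pow (h0 : (0 : ℝ) ∉ [[ε, d]]) (hk : 1 ≤ k) :
    ∫ t in ε..d, (∑ i ∈ Finset.range k, a i * t ^ i) / t ^ k =
      ∑ i ∈ Finset.range (k - 1), a i * (d ^ ((i : ℤ) + 1 - k) - ε ^ ((i : ℤ) + 1 - k)) /
          ((i : ℝ) + 1 - k) + a (k - 1) * (Real.log d - Real.log ε) := by
  obtain ⟨m, rfl⟩ := Nat.exists_eq_add_of_le' hk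
  have hne : ∀ t ∈ [[ε, d]], t ≠ 0 := fun t ht h => h0 (h ▸ ht)
  have hint : ∀ i ∈ Finset.range (m + 1),
      IntervalIntegrable (fun t : ℝ => a i * t ^ ((i : ℤ) - (m + 1 : ℕ))) volume ε d :=
    fun i _ => (intervalIntegrable_zpow (Or.inr h0)).const_mul _
  calc ∫ t in ε..d, (∑ i ∈ Finset.range (m + 1), a i * t ^ i) / t ^ (m + 1)
      = ∫ t in ε..d, ∑ i ∈ Finset.range (m + 1), a i * t ^ ((i : ℤ) - (m + 1 : ℕ)) := by
        refine integral_congr fun t ht => ?_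
        rw [Finset.sum_div]
        refine Finset.sum_congr rfl fun i _ => ?_
        rw [zpow_sub₀ (hne t ht), zpow_natCast, zpow_natCast, mul_div_assoc]
    _ = _ := by
        rw [integral_finsetSum hint, Finset.sum_range_succ, Nat.add_sub_cancel]
        congr 1
        · refine Finset.sum_congr rfl fun i hi => ?_
          have hi' : (i : ℤ) - (m + 1 : ℕ) ≠ -1 := by have := Finset.mem_range.1 hi; omega
          rw [intervalIntegral.integral_const_mul, integral_zpow (Or.inr ⟨hi', h0⟩)]
          push_cast
          ring_nf
        · simp only [intervalIntegral.integral_const_mul,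
            show (m : ℤ) - (m + 1 : ℕ) = -1 by push_cast; ring, zpow_neg_one]
          rw [integral_inv h0, Real.log_div (hne d right_mem_uIcc) (hne ε left_mem_uIcc)]

end Polynomial

theorem tendsto_cpow_add_sub_one_div {c : ℂ} (hc : c ≠ 0) (w : ℂ) :
    Tendsto (fun z => (c ^ (z + w) - 1) / (z + w)) (𝓝[≠] (-w)) (𝓝 (Complex.log c)) := by
  have hderiv := ((hasDerivAt_id (-w)).add_const w).const_cpow (c := c) (Or.inl hc)
  simp only [id, neg_add_cancel, Complex.cpow_zero, one_mul, mul_one] at hderiv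
  refine (hasDerivAt_iff_tendsto_slope.1 hderiv).congr fun z => ?_
  simp [slope_def_field, Complex.cpow_zero]

section FinitePart

variable {d C : ℝ} {k : ℕ} {φ P : ℝ → ℝ} {a : ℕ → ℝ}

theorem continuous_sub_of_eq_sum_pow (hφ : Continuous φ)
    (hP : ∀ t, P t = ∑ i ∈ Finset.range k, a i * t ^ i) : Continuous fun t => φ t - P t :=
  hφ.sub (by rw [funext hP]; fun_prop)

theorem tendsto_integral_ofReal_cpow_mul_add_sum (hd : 0 < d) (hφ : Continuous φ)
    (hP : ∀ t, P t = ∑ i ∈ Finset.range k, a i * t ^ i)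
    (hC : ∀ t ∈ Ioc 0 d, |φ t - P t| ≤ C * t ^ k) {z : ℂ} (hz : -(k + 1 : ℝ) < z.re)
    (hzk : ∀ i < k, z + i + 1 ≠ 0) :
    Tendsto (fun ε : ℝ => (∫ t in ε..d, (t : ℂ) ^ z * φ t) +
        ∑ i ∈ Finset.range k, (a i : ℂ) * (ε : ℂ) ^ (z + i + 1) / (z + i + 1)) (𝓝[>] 0)
      (𝓝 ((∫ t in (0 : ℝ)..d, (t : ℂ) ^ z * ↑(φ t - P t)) +
        ∑ i ∈ Finset.range k, (a i : ℂ) * (d : ℂ) ^ (z + i + 1) / (z + i + 1))) := by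
  have hR := continuous_sub_of_eq_sum_pow hφ hP
  refine ((tendsto_integral_left_of_integrableOn_Ioc hd
    (integrableOn_ofReal_cpow_mul hR hC hz)).add_const _).congr' ?_
  filter_upwards [Ioo_mem_nhdsGT hd] with ε hε
  have h0 : (0 : ℝ) ∉ [[ε, d]] := notMem_uIcc_of_lt hε.1 (hε.1.trans hε.2)
  have hint : ∀ g : ℝ → ℝ, Continuous g →
      IntervalIntegrable (fun t : ℝ => (t : ℂ) ^ z * g t) volume ε d := fun g hg =>
    (intervalIntegrable_cpow (Or.inr h0)).mul_continuousOn (by fun_prop)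
  have hsplit : ∫ t in ε..d, (t : ℂ) ^ z * φ t = (∫ t in ε..d, (t : ℂ) ^ z * ↑(φ t - P t)) +
      ∫ t in ε..d, (t : ℂ) ^ z * ↑(∑ i ∈ Finset.range k, a i * t ^ i) := by
    rw [← integral_add (hint _ hR)
      (hint (fun t => ∑ i ∈ Finset.range k, a i * t ^ i) (by fun_prop))]
    congr with t
    rw [← hP]
    push_cast
    ring
  rw [hsplit, integral_ofReal_cpow_mul_sum_pow a h0 hzk]
  simp only [mul_sub, sub_div, Finset.sum_sub_distrib]
  ring

theorem integrableOn_sub_div_pow (hφ : Continuous φ)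
    (hP : ∀ t, P t = ∑ i ∈ Finset.range k, a i * t ^ i)
    (hC : ∀ t ∈ Ioc 0 d, |φ t - P t| ≤ C * t ^ k) :
    IntegrableOn (fun t => (φ t - P t) / t ^ k) (Ioc 0 d) := by
  have hR := continuous_sub_of_eq_sum_pow hφ hP
  have h := (integrableOn_ofReal_cpow_mul hR hC (z := -(k : ℂ)) (by simp)).re
  simp only [ofReal_cpow_neg_natCast_mul, RCLike.re_to_complex, Complex.ofReal_re] at h
  exact h

theorem tendsto_integral_div_pow_add_sum_add_log (hd : 0 < d) (hk : 1 ≤ k) (hφ : Continuous φ)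
    (hP : ∀ t, P t = ∑ i ∈ Finset.range k, a i * t ^ i)
    (hC : ∀ t ∈ Ioc 0 d, |φ t - P t| ≤ C * t ^ k) :
    Tendsto (fun ε : ℝ => (∫ t in ε..d, φ t / t ^ k) +
        ∑ j ∈ Finset.range (k - 1), a j * ε ^ ((j : ℤ) + 1 - k) / ((j : ℝ) + 1 - k) +
        a (k - 1) * Real.log ε) (𝓝[>] 0)
      (𝓝 ((∫ t in (0 : ℝ)..d, (φ t - P t) / t ^ k) +
        ∑ j ∈ Finset.range (k - 1), a j * d ^ ((j : ℤ) + 1 - k) / ((j : ℝ) + 1 - k) +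
        a (k - 1) * Real.log d)) := by
  simp only [add_assoc]
  refine ((tendsto_integral_left_of_integrableOn_Ioc hd
    (integrableOn_sub_div_pow hφ hP hC)).add_const _).congr' ?_
  filter_upwards [Ioo_mem_nhdsGT hd] with ε hε
  have h0 : (0 : ℝ) ∉ [[ε, d]] := notMem_uIcc_of_lt hε.1 (hε.1.trans hε.2)
  have hne : ∀ t ∈ [[ε, d]], t ^ k ≠ 0 := fun t ht => pow_ne_zero k fun h => h0 (h ▸ ht)
  have hint : ∀ g : ℝ → ℝ, Continuous g →
      IntervalIntegrable (fun t : ℝ => g t / t ^ k) volume ε d := fun g hg =>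
    (ContinuousOn.div (by fun_prop) (by fun_prop) hne).intervalIntegrable
  have hsplit : ∫ t in ε..d, φ t / t ^ k = (∫ t in ε..d, (φ t - P t) / t ^ k) +
      ∫ t in ε..d, (∑ i ∈ Finset.range k, a i * t ^ i) / t ^ k := by
    have hR := continuous_sub_of_eq_sum_pow hφ hP
    rw [← integral_add (hint _ hR)
      (hint (fun t => ∑ i ∈ Finset.range k, a i * t ^ i) (by fun_prop))]
    congr with t
    rw [← hP]
    ring
  rw [hsplit, integral_sum_pow_div_pow a h0 hk]
  simp only [mul_sub, sub_div, Finset.sum_sub_distrib]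
  ring

theorem tendsto_integral_ofReal_cpow_mul_add_sum_sub_div (hd : 0 < d) (hk : 1 ≤ k)
    (hφ : Continuous φ) (hP : ∀ t, P t = ∑ i ∈ Finset.range k, a i * t ^ i)
    (hC : ∀ t ∈ Ioc 0 d, |φ t - P t| ≤ C * t ^ k) :
    Tendsto (fun z : ℂ => (∫ t in (0 : ℝ)..d, (t : ℂ) ^ z * ↑(φ t - P t)) +
        ∑ i ∈ Finset.range k, (a i : ℂ) * (d : ℂ) ^ (z + i + 1) / (z + i + 1) -
        (a (k - 1) : ℂ) / (z + k)) (𝓝[≠] (-(k : ℂ)))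
      (𝓝 ↑((∫ t in (0 : ℝ)..d, (φ t - P t) / t ^ k) +
        ∑ j ∈ Finset.range (k - 1), a j * d ^ ((j : ℤ) + 1 - k) / ((j : ℝ) + 1 - k) +
        a (k - 1) * Real.log d)) := by
  have hR := continuous_sub_of_eq_sum_pow hφ hP
  have hdC : (d : ℂ) ≠ 0 := Complex.ofReal_ne_zero.2 hd.ne'
  have hintegral : Tendsto (fun z : ℂ => ∫ t in (0 : ℝ)..d, (t : ℂ) ^ z * ↑(φ t - P t))
      (𝓝[≠] (-(k : ℂ))) (𝓝 ↑(∫ t in (0 : ℝ)..d, (φ t - P t) / t ^ k)) := by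
    have hcont := continuousAt_integral_ofReal_cpow_mul hR hC (z₀ := -(k : ℂ)) (by simp)
    simp only [← integral_of_le hd.le] at hcont
    have hval : ∫ t in (0 : ℝ)..d, (t : ℂ) ^ (-(k : ℂ)) * ↑(φ t - P t) =
        ↑(∫ t in (0 : ℝ)..d, (φ t - P t) / t ^ k) := by
      simp only [ofReal_cpow_neg_natCast_mul]
      exact integral_ofReal
    exact hval ▸ hcont.tendsto.mono_left nhdsWithin_le_nhds
  obtain ⟨m, rfl⟩ := Nat.exists_eq_add_of_le' hk
  simp only [Nat.add_sub_cancel]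
  have hsum : Tendsto
      (fun z : ℂ => ∑ i ∈ Finset.range m, (a i : ℂ) * (d : ℂ) ^ (z + i + 1) / (z + i + 1))
      (𝓝[≠] (-((m + 1 : ℕ) : ℂ))) (𝓝 ↑(∑ j ∈ Finset.range m,
        a j * d ^ ((j : ℤ) + 1 - (m + 1 : ℕ)) / ((j : ℝ) + 1 - (m + 1 : ℕ)))) := by
    rw [Complex.ofReal_sum]
    refine tendsto_nhdsWithin_of_tendsto_nhds (tendsto_finsetSum _ fun i hi => ?_)
    have hexp : -((m + 1 : ℕ) : ℂ) + i + 1 = (((i : ℤ) + 1 - (m + 1 : ℕ) : ℤ) : ℂ) := by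
      push_cast; ring
    have hne : -((m + 1 : ℕ) : ℂ) + i + 1 ≠ 0 := by
      have hi' : (i : ℤ) + 1 - (m + 1 : ℕ) ≠ 0 := by have := Finset.mem_range.1 hi; omega
      rw [hexp]
      exact_mod_cast hi'
    have hcont : ContinuousAt (fun z : ℂ => (a i : ℂ) * (d : ℂ) ^ (z + i + 1) / (z + i + 1))
        (-((m + 1 : ℕ) : ℂ)) := by
      fun_prop (disch := first | exact hne | exact Or.inl (by simpa using hd))
    convert hcont.tendsto using 2
    rw [hexp, Complex.cpow_intCast]
    push_cast
    ring
  have hlog := (tendsto_cpow_add_sub_one_div hdC ((m + 1 : ℕ) : ℂ)).const_mul (a m : ℂ)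
  rw [← Complex.ofReal_log hd.le] at hlog
  rw [Complex.ofReal_add, Complex.ofReal_add, Complex.ofReal_mul]
  refine ((hintegral.add hsum).add hlog).congr fun z => ?_
  rw [Finset.sum_range_succ, Nat.cast_succ, ← add_assoc]
  ring

end FinitePart

/-- the analytic continuation `F` of `z ↦ ∫_0^d t^z φ(t) dt` agrees with
Hadamard's finite part away from the poles, and at the pole `z = -k` the finite part is
obtained by removing the pole. -/
theorem finite_part_eq_analytic_continuation
    (d : ℝ) (hd : 0 < d) (k : ℕ) (hk : 1 ≤ k) (φ : ℝ → ℝ) (hφ : ContDiff ℝ (⊤ : ℕ∞) φ)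
    (F : ℂ → ℂ)
    (hF : ∀ z : ℂ, F z =
      (∫ t in (0:ℝ)..d, (t : ℂ) ^ z *
          ((φ t - ∑ i ∈ Finset.range k,
              iteratedDeriv i φ 0 * t ^ i / (Nat.factorial i) : ℝ) : ℂ)) +
        ∑ i ∈ Finset.range k,
          ((iteratedDeriv i φ 0 / (Nat.factorial i) : ℝ) : ℂ) *
            (d : ℂ) ^ (z + i + 1) / (z + i + 1)) :
    (∀ z : ℂ, -(k + 1 : ℝ) < z.re → (∀ j : ℕ, 1 ≤ j → j ≤ k → z ≠ -(j : ℂ)) →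
      Tendsto (fun ε : ℝ =>
          (∫ t in ε..d, (t : ℂ) ^ z * (φ t : ℂ)) +
            ∑ j ∈ Finset.range k,
              ((iteratedDeriv j φ 0 / (Nat.factorial j) : ℝ) : ℂ) *
                (ε : ℂ) ^ (z + j + 1) / (z + j + 1))
        (nhdsWithin 0 (Ioi 0)) (nhds (F z))) ∧
    ∃ L : ℝ,
      Tendsto (fun ε : ℝ =>
          (∫ t in ε..d, φ t / t ^ k) +
            ∑ j ∈ Finset.range (k - 1),
              (iteratedDeriv j φ 0 / (Nat.factorial j)) *
                ε ^ ((j : ℤ) + 1 - k) / ((j : ℝ) + 1 - k) +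
            (iteratedDeriv (k - 1) φ 0 / (Nat.factorial (k - 1))) * Real.log ε)
        (nhdsWithin 0 (Ioi 0)) (nhds L) ∧
      Tendsto (fun z : ℂ =>
          F z - ((iteratedDeriv (k - 1) φ 0 / (Nat.factorial (k - 1)) : ℝ) : ℂ) / (z + k))
        (nhdsWithin (-(k : ℂ)) {(-(k : ℂ))}ᶜ) (nhds (L : ℂ)) := by
  have hP : ∀ t, ∑ i ∈ Finset.range k, iteratedDeriv i φ 0 * t ^ i / (Nat.factorial i) =
      ∑ i ∈ Finset.range k, iteratedDeriv i φ 0 / (Nat.factorial i) * t ^ i :=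
    fun t => Finset.sum_congr rfl fun i _ => mul_div_right_comm _ _ _
  obtain ⟨C, hC⟩ := exists_abs_sub_sum_iteratedDeriv_le (hφ.of_le (mod_cast le_top)) hd
  have hC' := fun t (ht : t ∈ Ioc 0 d) => hC t (Ioc_subset_Icc_self ht)
  refine ⟨fun z hz hzk => ?_, _,
    tendsto_integral_div_pow_add_sum_add_log hd hk hφ.continuous hP hC', ?_⟩
  · rw [hF z]
    exact tendsto_integral_ofReal_cpow_mul_add_sum hd hφ.continuous hP hC' hz
      fun i hi h => hzk (i + 1) (by omega) hi (by push_cast; linear_combination h)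
  · simp only [hF]
    exact tendsto_integral_ofReal_cpow_mul_add_sum_sub_div hd hk hφ.continuous hP hC'
end

section
/- Let d > 0 and let k ≥ 1 be a natural number. There exist a natural number N and a constant C > 0 with the following property: for every C^∞ function φ : ℝ → ℝ and every z ∈ ℂ with 0 < |z + k| ≤ 1/2, one has |F(z) − φ^{(k−1)}(0)/((k−1)!(z+k))| ≤ C · Σ_{i=0}^{N} sup_{t ∈ [0,d]} |φ^{(i)}(t)|, where F(z) = ∫_0^d t^z (φ(t) − Σ_{i=0}^{k−1} φ^{(i)}(0) t^i / i!) dt + Σ_{i=0}^{k−1} (φ^{(i)}(0)/i!) · d^{z+i+1}/(z+i+1). -/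
/-!
Write `k = m + 1`. Splitting off the term `i = m` of the sum, `F(z) - φ⁽ᵐ⁾(0) / (m! (z + k))`
becomes a sum of three pieces, each bounded near `z = -k`:
* the Taylor remainder of order `m` is at most `sup |φ⁽ᵏ⁾| · tᵏ`, so for `|Re z + k| ≤ 1/2` the
  integrand is dominated by `max 1 d · sup |φ⁽ᵏ⁾| · t^(-1/2)`, which is integrable on `[0, d]`;
* for `i < m` the denominators `z + i + 1` stay at distance at least `1/2` from `0`;
* the term `i = m` and the pole combine to `φ⁽ᵐ⁾(0)/m! · (d^w - 1)/w` with `w = z + k`, and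
  `|d^w - 1| ≤ |w log d| e^{|w log d|}`.
-/

open MeasureTheory Filter Set

noncomputable def supNormIteratedDeriv (d : ℝ) (φ : ℝ → ℝ) (i : ℕ) : ℝ :=
  ⨆ t : Icc (0:ℝ) d, |iteratedDeriv i φ t|

theorem supNormIteratedDeriv_nonneg (d : ℝ) (φ : ℝ → ℝ) (i : ℕ) :
    0 ≤ supNormIteratedDeriv d φ i :=
  Real.iSup_nonneg fun _ => abs_nonneg _

theorem abs_le_iSup_Icc_abs {f : ℝ → ℝ} {a b x : ℝ} (hf : ContinuousOn f (Icc a b))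
    (hx : x ∈ Icc a b) : |f x| ≤ ⨆ t : Icc a b, |f t| := by
  have hbdd := isCompact_Icc.bddAbove_image hf.abs
  rw [image_eq_range] at hbdd
  exact le_ciSup hbdd ⟨x, hx⟩

theorem abs_iteratedDeriv_le_supNormIteratedDeriv {φ : ℝ → ℝ} {d t : ℝ} {i : ℕ}
    (hφ : ContDiff ℝ i φ) (ht : t ∈ Icc 0 d) :
    |iteratedDeriv i φ t| ≤ supNormIteratedDeriv d φ i :=
  abs_le_iSup_Icc_abs (hφ.continuous_iteratedDeriv i le_rfl).continuousOn ht

theorem abs_taylorCoeff_le_supNormIteratedDeriv {φ : ℝ → ℝ} {d : ℝ} (hd : 0 ≤ d) {i : ℕ}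
    (hφ : ContDiff ℝ i φ) :
    |iteratedDeriv i φ 0 / i.factorial| ≤ supNormIteratedDeriv d φ i := by
  rw [abs_div, Nat.abs_cast]
  exact (div_le_self (abs_nonneg _) (by exact_mod_cast i.factorial_pos)).trans
    (abs_iteratedDeriv_le_supNormIteratedDeriv hφ ⟨le_rfl, hd⟩)

theorem abs_sub_taylor_le {φ : ℝ → ℝ} {d t : ℝ} {n : ℕ} (hφ : ContDiff ℝ (n + 1) φ)
    (hd : 0 < d) (ht : t ∈ Icc 0 d) :
    |φ t - ∑ i ∈ Finset.range (n + 1), iteratedDeriv i φ 0 * t ^ i / i.factorial| ≤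
      supNormIteratedDeriv d φ (n + 1) * t ^ (n + 1) := by
  have hwithin : ∀ i ≤ n + 1, ∀ y ∈ Icc 0 d,
      iteratedDerivWithin i φ (Icc 0 d) y = iteratedDeriv i φ y := fun i hi y hy =>
    iteratedDerivWithin_eq_iteratedDeriv (uniqueDiffOn_Icc hd)
      (hφ.of_le (by exact_mod_cast hi)).contDiffAt hy
  have htaylor : taylorWithinEval φ n (Icc 0 d) 0 t =
      ∑ i ∈ Finset.range (n + 1), iteratedDeriv i φ 0 * t ^ i / i.factorial := by
    rw [taylor_within_apply]
    refine Finset.sum_congr rfl fun i hi => ?_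
    rw [hwithin i (Finset.mem_range.mp hi).le 0 ⟨le_rfl, hd.le⟩, smul_eq_mul, sub_zero]
    field_simp
  have hremainder := taylor_mean_remainder_bound hd.le hφ.contDiffOn ht fun y hy => by
    rw [hwithin _ le_rfl y hy, Real.norm_eq_abs]
    exact abs_iteratedDeriv_le_supNormIteratedDeriv hφ hy
  rw [← htaylor, ← Real.norm_eq_abs]
  refine hremainder.trans ?_
  rw [sub_zero]
  exact div_le_self (mul_nonneg (supNormIteratedDeriv_nonneg d φ _) (pow_nonneg ht.1 _))
    (by exact_mod_cast n.factorial_pos)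

theorem rpow_le_max_one_mul_rpow_neg_half {t d a : ℝ} (ht : t ∈ Ioc 0 d) (ha : |a| ≤ 1 / 2) :
    t ^ a ≤ max 1 d * t ^ (-1 / 2 : ℝ) := by
  obtain ⟨ha₁, ha₂⟩ := abs_le.mp ha
  have hshift : t ^ (a + 1 / 2) ≤ max 1 d := by
    rcases le_total t 1 with ht₁ | ht₁
    · exact (Real.rpow_le_one ht.1.le ht₁ (by linarith)).trans (le_max_left _ _)
    · calc t ^ (a + 1 / 2) ≤ t ^ (1 : ℝ) := Real.rpow_le_rpow_of_exponent_le ht₁ (by linarith)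
        _ ≤ max 1 d := by rw [Real.rpow_one]; exact ht.2.trans (le_max_right _ _)
  calc t ^ a = t ^ (a + 1 / 2) * t ^ (-1 / 2 : ℝ) := by
        rw [← Real.rpow_add ht.1]; ring_nf
    _ ≤ max 1 d * t ^ (-1 / 2 : ℝ) := by gcongr; exact Real.rpow_nonneg ht.1.le _

theorem norm_integral_cpow_mul_le {d M : ℝ} {n : ℕ} {z : ℂ} {f : ℝ → ℂ} (hd : 0 < d)
    (hM : 0 ≤ M) (hz : |z.re + n| ≤ 1 / 2) (hf : ∀ t ∈ Ioc 0 d, ‖f t‖ ≤ M * t ^ n) :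
    ‖∫ t in (0:ℝ)..d, (t : ℂ) ^ z * f t‖ ≤ max 1 d * (∫ t in (0:ℝ)..d, t ^ (-1 / 2 : ℝ)) * M := by
  have hint : IntervalIntegrable (fun t : ℝ => M * max 1 d * t ^ (-1 / 2 : ℝ)) volume 0 d :=
    (intervalIntegral.intervalIntegrable_rpow' (by norm_num)).const_mul _
  refine (intervalIntegral.norm_integral_le_of_norm_le hd.le (ae_of_all _ fun t ht => ?_)
    hint).trans_eq ?_
  · rw [norm_mul, Complex.norm_cpow_eq_rpow_re_of_pos ht.1]
    calc t ^ z.re * ‖f t‖ ≤ t ^ z.re * (M * t ^ n) := by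
          gcongr
          · exact Real.rpow_nonneg ht.1.le _
          · exact hf t ht
      _ = M * t ^ (z.re + n) := by rw [Real.rpow_add ht.1, Real.rpow_natCast]; ring
      _ ≤ M * (max 1 d * t ^ (-1 / 2 : ℝ)) := by
          gcongr; exact rpow_le_max_one_mul_rpow_neg_half ht hz
      _ = M * max 1 d * t ^ (-1 / 2 : ℝ) := by ring
  · rw [intervalIntegral.integral_const_mul]; ring

theorem norm_ofReal_cpow_le {d : ℝ} (hd : 0 < d) (w : ℂ) :
    ‖(d : ℂ) ^ w‖ ≤ Real.exp (|Real.log d| * ‖w‖) := by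
  rw [Complex.norm_cpow_eq_rpow_re_of_pos hd, Real.rpow_def_of_pos hd, Real.exp_le_exp]
  calc Real.log d * w.re ≤ |Real.log d| * |w.re| := by rw [← abs_mul]; exact le_abs_self _
    _ ≤ |Real.log d| * ‖w‖ := by gcongr; exact Complex.abs_re_le_norm w

theorem norm_ofReal_cpow_sub_one_div_le {d r : ℝ} (hd : 0 < d) {w : ℂ} (hw : ‖w‖ ≤ r) :
    ‖((d : ℂ) ^ w - 1) / w‖ ≤ |Real.log d| * Real.exp (|Real.log d| * r) := by
  rcases eq_or_ne w 0 with rfl | hw₀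
  · simp only [div_zero, norm_zero]; positivity
  have hexp : (d : ℂ) ^ w = Complex.exp (Real.log d * w) := by
    rw [Complex.cpow_def_of_ne_zero (by exact_mod_cast hd.ne'), Complex.ofReal_log hd.le]
  have hlog : ‖(Real.log d : ℂ) * w‖ = |Real.log d| * ‖w‖ := by
    rw [norm_mul, Complex.norm_real, Real.norm_eq_abs]
  rw [norm_div, div_le_iff₀ (norm_pos_iff.2 hw₀), hexp]
  calc ‖Complex.exp (Real.log d * w) - 1‖
      ≤ ‖(Real.log d : ℂ) * w‖ * Real.exp ‖(Real.log d : ℂ) * w‖ := by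
        simpa using Complex.norm_exp_sub_sum_le_norm_mul_exp (Real.log d * w) 1
    _ ≤ |Real.log d| * ‖w‖ * Real.exp (|Real.log d| * r) := by rw [hlog]; gcongr
    _ = _ := by ring

theorem norm_cpow_add_natCast_div_le {d : ℝ} (hd : 0 < d) {z : ℂ} {j k : ℕ} (hjk : j < k)
    (hz : ‖z + k‖ ≤ 1 / 2) :
    ‖(d : ℂ) ^ (z + j) / (z + j)‖ ≤ 2 * Real.exp (|Real.log d| * (k + 1)) := by
  have hshift : z + j = (z + k) - ((k - j : ℕ) : ℂ) := by push_cast [Nat.cast_sub hjk.le]; ring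
  have hgap₁ : (1 : ℝ) ≤ ‖((k - j : ℕ) : ℂ)‖ := by
    rw [Complex.norm_natCast]; exact_mod_cast Nat.sub_pos_of_lt hjk
  have hgap₂ : ‖((k - j : ℕ) : ℂ)‖ ≤ k := by
    rw [Complex.norm_natCast]; exact_mod_cast Nat.sub_le k j
  have hlower : 1 / 2 ≤ ‖z + j‖ := by
    rw [hshift, norm_sub_rev]
    linarith [norm_sub_norm_le ((k - j : ℕ) : ℂ) (z + k)]
  have hupper : ‖z + j‖ ≤ k + 1 := by
    rw [hshift]
    linarith [norm_sub_le (z + k) ((k - j : ℕ) : ℂ)]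
  rw [norm_div, div_le_iff₀ (by linarith)]
  calc ‖(d : ℂ) ^ (z + j)‖ ≤ Real.exp (|Real.log d| * (k + 1)) :=
        (norm_ofReal_cpow_le hd _).trans (by gcongr)
    _ ≤ 2 * Real.exp (|Real.log d| * (k + 1)) * ‖z + j‖ := by
        nlinarith [Real.exp_pos (|Real.log d| * (k + 1))]

noncomputable def finitePart (d : ℝ) (k : ℕ) (φ : ℝ → ℝ) (z : ℂ) : ℂ :=
  (∫ t in (0:ℝ)..d, (t : ℂ) ^ z *
      ((φ t - ∑ i ∈ Finset.range k, iteratedDeriv i φ 0 * t ^ i / i.factorial : ℝ) : ℂ)) +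
    ∑ i ∈ Finset.range k,
      ((iteratedDeriv i φ 0 / i.factorial : ℝ) : ℂ) * (d : ℂ) ^ (z + i + 1) / (z + i + 1)

theorem finitePart_succ_sub_pole (d : ℝ) (m : ℕ) (φ : ℝ → ℝ) (z : ℂ) :
    finitePart d (m + 1) φ z - ((iteratedDeriv m φ 0 / m.factorial : ℝ) : ℂ) / (z + (m + 1 : ℕ)) =
      (∫ t in (0:ℝ)..d, (t : ℂ) ^ z *
        ((φ t - ∑ i ∈ Finset.range (m + 1), iteratedDeriv i φ 0 * t ^ i / i.factorial : ℝ) : ℂ)) +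
      ∑ i ∈ Finset.range m,
        ((iteratedDeriv i φ 0 / i.factorial : ℝ) : ℂ) * (d : ℂ) ^ (z + i + 1) / (z + i + 1) +
      ((iteratedDeriv m φ 0 / m.factorial : ℝ) : ℂ) *
        (((d : ℂ) ^ (z + m + 1) - 1) / (z + m + 1)) := by
  rw [finitePart, Finset.sum_range_succ]
  push_cast
  ring

theorem norm_finitePart_succ_sub_pole_le {d : ℝ} (hd : 0 < d) {m : ℕ} {φ : ℝ → ℝ}
    (hφ : ContDiff ℝ (m + 1) φ) {z : ℂ} (hz : ‖z + (m + 1 : ℕ)‖ ≤ 1 / 2) :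
    ‖finitePart d (m + 1) φ z -
        ((iteratedDeriv m φ 0 / m.factorial : ℝ) : ℂ) / (z + (m + 1 : ℕ))‖ ≤
      max 1 d * (∫ t in (0:ℝ)..d, t ^ (-1 / 2 : ℝ)) * supNormIteratedDeriv d φ (m + 1) +
      2 * Real.exp (|Real.log d| * (m + 2)) * ∑ i ∈ Finset.range m, supNormIteratedDeriv d φ i +
      |Real.log d| * Real.exp (|Real.log d| * (1 / 2)) * supNormIteratedDeriv d φ m := by
  have hcoeff : ∀ i ≤ m, ‖((iteratedDeriv i φ 0 / i.factorial : ℝ) : ℂ)‖ ≤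
      supNormIteratedDeriv d φ i := fun i hi => by
    rw [Complex.norm_real, Real.norm_eq_abs]
    exact abs_taylorCoeff_le_supNormIteratedDeriv hd.le
      (hφ.of_le (by exact_mod_cast hi.trans m.le_succ))
  have hre : |z.re + (m + 1 : ℕ)| ≤ 1 / 2 := by
    simpa using (Complex.abs_re_le_norm _).trans hz
  have hremainder := norm_integral_cpow_mul_le hd (supNormIteratedDeriv_nonneg d φ (m + 1)) hre
    (f := fun t => ((φ t - ∑ i ∈ Finset.range (m + 1),
      iteratedDeriv i φ 0 * t ^ i / i.factorial : ℝ) : ℂ)) fun t ht => by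
      rw [Complex.norm_real, Real.norm_eq_abs]
      exact abs_sub_taylor_le hφ hd (Ioc_subset_Icc_self ht)
  have hlower : ‖∑ i ∈ Finset.range m,
      ((iteratedDeriv i φ 0 / i.factorial : ℝ) : ℂ) * (d : ℂ) ^ (z + i + 1) / (z + i + 1)‖ ≤
      2 * Real.exp (|Real.log d| * (m + 2)) * ∑ i ∈ Finset.range m, supNormIteratedDeriv d φ i := by
    rw [Finset.mul_sum]
    refine (norm_sum_le _ _).trans (Finset.sum_le_sum fun i hi => ?_)
    have hterm := norm_cpow_add_natCast_div_le hd (j := i + 1) (by simpa using hi) hz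
    push_cast at hterm
    rw [← add_assoc, add_assoc (m : ℝ), one_add_one_eq_two] at hterm
    rw [mul_div_assoc, norm_mul, mul_comm]
    exact mul_le_mul hterm (hcoeff i (Finset.mem_range.mp hi).le) (norm_nonneg _) (by positivity)
  have hpole : ‖((iteratedDeriv m φ 0 / m.factorial : ℝ) : ℂ) *
      (((d : ℂ) ^ (z + m + 1) - 1) / (z + m + 1))‖ ≤
      |Real.log d| * Real.exp (|Real.log d| * (1 / 2)) * supNormIteratedDeriv d φ m := by
    rw [norm_mul, mul_comm]
    exact mul_le_mul (norm_ofReal_cpow_sub_one_div_le hd (by simpa [add_assoc] using hz))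
      (hcoeff m le_rfl) (norm_nonneg _) (by positivity)
  rw [finitePart_succ_sub_pole]
  exact norm_add₃_le.trans (add_le_add_three hremainder hlower hpole)

/-- uniform boundedness of the regularized Riesz functional near the pole
`z = -k` (Lemma on the family of distributions `u_z`). -/
theorem uniform_bound_near_pole
    (d : ℝ) (hd : 0 < d) (k : ℕ) (hk : 1 ≤ k)
    (F : (ℝ → ℝ) → ℂ → ℂ)
    (hF : ∀ φ : ℝ → ℝ, ∀ z : ℂ, F φ z =
      (∫ t in (0:ℝ)..d, (t : ℂ) ^ z *
          ((φ t - ∑ i ∈ Finset.range k,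
              iteratedDeriv i φ 0 * t ^ i / (Nat.factorial i) : ℝ) : ℂ)) +
        ∑ i ∈ Finset.range k,
          ((iteratedDeriv i φ 0 / (Nat.factorial i) : ℝ) : ℂ) *
            (d : ℂ) ^ (z + i + 1) / (z + i + 1)) :
    ∃ (N : ℕ) (C : ℝ), 0 < C ∧
      ∀ φ : ℝ → ℝ, ContDiff ℝ (⊤ : ℕ∞) φ → ∀ z : ℂ,
        0 < ‖z + (k : ℂ)‖ → ‖z + (k : ℂ)‖ ≤ 1 / 2 →
        ‖F φ z - ((iteratedDeriv (k - 1) φ 0 / (Nat.factorial (k - 1)) : ℝ) : ℂ) / (z + k)‖ ≤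
          C * ∑ i ∈ Finset.range (N + 1), ⨆ t : Icc (0:ℝ) d, |iteratedDeriv i φ t| := by
  obtain ⟨m, rfl⟩ : ∃ m, k = m + 1 := ⟨k - 1, by omega⟩
  obtain rfl : F = finitePart d (m + 1) := funext fun φ => funext (hF φ)
  set L := |Real.log d|
  set A := max 1 d * ∫ t in (0:ℝ)..d, t ^ (-1 / 2 : ℝ)
  set B := 2 * Real.exp (L * (m + 2))
  set D := L * Real.exp (L * (1 / 2))
  set C := max A (max B D)
  have hB : B ≤ C := (le_max_left _ _).trans (le_max_right _ _)
  refine ⟨m + 1, C, (by positivity : 0 < B).trans_le hB, fun φ hφ z _ hz => ?_⟩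
  have hM := supNormIteratedDeriv_nonneg d φ
  rw [Nat.add_sub_cancel]
  change _ ≤ C * ∑ i ∈ Finset.range (m + 1 + 1), supNormIteratedDeriv d φ i
  calc _ ≤ A * supNormIteratedDeriv d φ (m + 1) +
          B * ∑ i ∈ Finset.range m, supNormIteratedDeriv d φ i + D * supNormIteratedDeriv d φ m :=
        norm_finitePart_succ_sub_pole_le hd (hφ.of_le (by exact_mod_cast le_top)) hz
    _ ≤ C * supNormIteratedDeriv d φ (m + 1) +
          C * ∑ i ∈ Finset.range m, supNormIteratedDeriv d φ i + C * supNormIteratedDeriv d φ m :=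
        add_le_add_three (mul_le_mul_of_nonneg_right (le_max_left _ _) (hM _))
          (mul_le_mul_of_nonneg_right hB (Finset.sum_nonneg fun i _ => hM i))
          (mul_le_mul_of_nonneg_right ((le_max_right _ _).trans (le_max_right _ _)) (hM _))
    _ = C * ∑ i ∈ Finset.range (m + 1 + 1), supNormIteratedDeriv d φ i := by
        rw [Finset.sum_range_succ, Finset.sum_range_succ]; ring
end
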